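/- An STS_2(v) does not have an automorphism of order 3 of type A_{v,f} with f ≡ 2 (mod 3); that is, if D is an STS_2(v) invariant under a matrix conjugate in GL(v,2) to A_{v,f}, then f ≢ 2 (mod 3). -/
import Mathlib

/-- The action of a matrix `A` on subspaces of `GF(2)^v`, induced by the
right action `x ↦ x ⬝ A` on vectors. -/
def mapMat {v : ℕ} (A : Matrix (Fin v) (Fin v) (ZMod 2))
    (W : Submodule (ZMod 2) (Fin v → ZMod 2)) : Submodule (ZMod 2) (Fin v → ZMod 2) :=
  W.map A.vecMulLinear

/-- A binary q-Steiner triple system `STS_2(v)`. -/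
def IsSTS (v : ℕ) (D : Set (Submodule (ZMod 2) (Fin v → ZMod 2))) : Prop :=
  (∀ B ∈ D, Module.finrank (ZMod 2) B = 3) ∧
  ∀ L : Submodule (ZMod 2) (Fin v → ZMod 2), Module.finrank (ZMod 2) L = 2 →
    ∃! B, B ∈ D ∧ L ≤ B

/-- The block-diagonal matrix `A_{v,f}` over `GF(2)`: `(v-f)/2` consecutive 2×2 blocks
`[[0,1],[1,1]]` on the diagonal, followed by the `f×f` identity matrix. -/
def Avf (v f : ℕ) : Matrix (Fin v) (Fin v) (ZMod 2) :=
  Matrix.of fun i j =>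
    if (i : ℕ) < v - f then
      if (i : ℕ) % 2 = 0 then (if (j : ℕ) = (i : ℕ) + 1 then 1 else 0)
      else (if (j : ℕ) = (i : ℕ) - 1 ∨ (j : ℕ) = (i : ℕ) then 1 else 0)
    else (if j = i then 1 else 0)

open Matrix Submodule Finset

section Aux

variable {v f : ℕ}

lemma Avf_entry (i j : Fin v) :
    Avf v f i j =
      if (i : ℕ) < v - f then
        if (i : ℕ) % 2 = 0 then (if (j : ℕ) = (i : ℕ) + 1 then 1 else 0)
        else (if (j : ℕ) = (i : ℕ) - 1 ∨ (j : ℕ) = (i : ℕ) then 1 else 0)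
      else (if (j : ℕ) = (i : ℕ) then 1 else 0) := by
  simp only [Avf, Matrix.of_apply]
  by_cases h : (i : ℕ) < v - f
  · rw [if_pos h, if_pos h]
  · rw [if_neg h, if_neg h]
    by_cases hj : (j : ℕ) = (i : ℕ)
    · rw [if_pos hj, if_pos (Fin.ext hj)]
    · rw [if_neg hj, if_neg (fun hc => hj (congrArg Fin.val hc))]

lemma vecMul_Avf (hvf : (v - f) % 2 = 0) (x : Fin v → ZMod 2) (j : Fin v) :
    (x ᵥ* Avf v f) j =
      if h : (j : ℕ) < v - f then
        if h2 : (j : ℕ) % 2 = 0 then x ⟨(j : ℕ) + 1, by have := j.isLt; omega⟩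
        else x ⟨(j : ℕ) - 1, by have := j.isLt; omega⟩ + x j
      else x j := by
  by_cases h : (j : ℕ) < v - f
  · by_cases h2 : (j : ℕ) % 2 = 0
    · rw [dif_pos h, dif_pos h2]
      have hb : ((j : ℕ) + 1) < v := by have := j.isLt; omega
      set a : Fin v := ⟨(j : ℕ) + 1, hb⟩ with ha
      have hav : (a : ℕ) = (j : ℕ) + 1 := rfl
      show (∑ i, x i * Avf v f i j) = x a
      rw [Finset.sum_eq_single a]
      · rw [Avf_entry, if_pos (by omega), if_neg (by omega), if_pos (by omega), mul_one]
      · intro i _ hia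
        have hia' : (i : ℕ) ≠ (j : ℕ) + 1 := fun hc => hia (Fin.ext (hc.trans hav.symm))
        rw [Avf_entry]
        by_cases hi : (i : ℕ) < v - f
        · rw [if_pos hi]
          by_cases hi2 : (i : ℕ) % 2 = 0
          · rw [if_pos hi2, if_neg (by omega), mul_zero]
          · rw [if_neg hi2, if_neg (by omega), mul_zero]
        · rw [if_neg hi, if_neg (by omega), mul_zero]
      · intro hn; exact absurd (Finset.mem_univ a) hn
    · rw [dif_pos h, dif_neg h2]
      have hb : ((j : ℕ) - 1) < v := by have := j.isLt; omega
      set a : Fin v := ⟨(j : ℕ) - 1, hb⟩ with ha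
      have hav : (a : ℕ) = (j : ℕ) - 1 := rfl
      have haj : a ≠ j := by
        intro hc
        have : (j : ℕ) - 1 = (j : ℕ) := by
          have := congrArg Fin.val hc
          simpa [hav] using this
        omega
      show (∑ i, x i * Avf v f i j) = x a + x j
      have key : ∀ i : Fin v, x i * Avf v f i j =
          (if i = a then x a else 0) + (if i = j then x j else 0) := by
        intro i
        by_cases h1 : i = a
        · rw [h1, if_pos rfl, if_neg haj, add_zero, Avf_entry,
            if_pos (by omega), if_pos (by omega), if_pos (by omega), mul_one]
        · by_cases h1' : i = j
          · rw [h1', if_neg (fun hc => haj hc.symm), if_pos rfl,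
              zero_add, Avf_entry, if_pos h, if_neg h2, if_pos (Or.inr rfl), mul_one]
          · rw [if_neg h1, if_neg h1', add_zero, Avf_entry]
            have hia : (i : ℕ) ≠ (a : ℕ) := fun hc => h1 (Fin.ext hc)
            have hij : (i : ℕ) ≠ (j : ℕ) := fun hc => h1' (Fin.ext hc)
            by_cases hi : (i : ℕ) < v - f
            · rw [if_pos hi]
              by_cases hi2 : (i : ℕ) % 2 = 0
              · rw [if_pos hi2, if_neg (by omega), mul_zero]
              · rw [if_neg hi2, if_neg (by omega), mul_zero]
            · rw [if_neg hi, if_neg (by omega), mul_zero]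
      calc (∑ i, x i * Avf v f i j)
          = ∑ i, ((if i = a then x a else 0) + (if i = j then x j else 0)) :=
            Finset.sum_congr rfl fun i _ => key i
        _ = x a + x j := by
            rw [Finset.sum_add_distrib, Finset.sum_ite_eq' Finset.univ a,
              Finset.sum_ite_eq' Finset.univ j]
            simp
  · rw [dif_neg h]
    show (∑ i, x i * Avf v f i j) = x j
    rw [Finset.sum_eq_single j]
    · rw [Avf_entry, if_neg h, if_pos rfl, mul_one]
    · intro i _ hij
      have hij' : (i : ℕ) ≠ (j : ℕ) := fun hc => hij (Fin.ext hc)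
      rw [Avf_entry]
      by_cases hi : (i : ℕ) < v - f
      · rw [if_pos hi]
        by_cases hi2 : (i : ℕ) % 2 = 0
        · rw [if_pos hi2, if_neg (by omega), mul_zero]
        · rw [if_neg hi2, if_neg (by omega), mul_zero]
      · rw [if_neg hi, if_neg (by omega), mul_zero]
    · intro hn; exact absurd (Finset.mem_univ j) hn

lemma vecMul_Avf_cube (hvf : (v - f) % 2 = 0) (x : Fin v → ZMod 2) :
    ((x ᵥ* Avf v f) ᵥ* Avf v f) ᵥ* Avf v f = x := by
  have hzm : ∀ a b : ZMod 2, a + (b + a) = b := by decide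
  have hzm2 : ∀ a b : ZMod 2, (a + b) + (b + (a + b)) = b := by decide
  funext j
  by_cases h : (j : ℕ) < v - f
  · by_cases h2 : (j : ℕ) % 2 = 0
    · -- j even
      have hb : ((j : ℕ) + 1) < v := by have := j.isLt; omega
      set a : Fin v := ⟨(j : ℕ) + 1, hb⟩ with ha
      have hav : (a : ℕ) = (j : ℕ) + 1 := rfl
      have hA1 : ∀ y : Fin v → ZMod 2, (y ᵥ* Avf v f) j = y a := by
        intro y; rw [vecMul_Avf hvf, dif_pos h, dif_pos h2]
      have hA2 : ∀ y : Fin v → ZMod 2, (y ᵥ* Avf v f) a = y j + y a := by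
        intro y
        rw [vecMul_Avf hvf, dif_pos (by omega : (a : ℕ) < v - f),
          dif_neg (by omega : ¬ ((a : ℕ) % 2 = 0))]
        all_goals first
        | rfl
        | simp only [show (a : ℕ) - 1 = (j : ℕ) from by omega, Fin.eta]
      rw [hA1 ((x ᵥ* Avf v f) ᵥ* Avf v f), hA2 (x ᵥ* Avf v f), hA1 x, hA2 x]
      exact hzm _ _
    · -- j odd
      have hb : ((j : ℕ) - 1) < v := by have := j.isLt; omega
      set a : Fin v := ⟨(j : ℕ) - 1, hb⟩ with ha
      have hav : (a : ℕ) = (j : ℕ) - 1 := rfl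
      have hA1 : ∀ y : Fin v → ZMod 2, (y ᵥ* Avf v f) j = y a + y j := by
        intro y
        rw [vecMul_Avf hvf, dif_pos h, dif_neg h2]
        all_goals first
        | rfl
        | simp only [show (j : ℕ) - 1 = (a : ℕ) from rfl, Fin.eta]
      have hA2 : ∀ y : Fin v → ZMod 2, (y ᵥ* Avf v f) a = y j := by
        intro y
        rw [vecMul_Avf hvf, dif_pos (by omega : (a : ℕ) < v - f),
          dif_pos (by omega : (a : ℕ) % 2 = 0)]
        all_goals first
        | rfl
        | simp only [show (a : ℕ) + 1 = (j : ℕ) from by omega, Fin.eta]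
      rw [hA1 ((x ᵥ* Avf v f) ᵥ* Avf v f), hA2 (x ᵥ* Avf v f), hA1 (x ᵥ* Avf v f),
        hA2 x, hA1 x]
      exact hzm2 _ _
  · have hA : ∀ y : Fin v → ZMod 2, (y ᵥ* Avf v f) j = y j := by
      intro y; rw [vecMul_Avf hvf, dif_neg h]
    rw [hA, hA, hA]

lemma fixA_iff (hvf : (v - f) % 2 = 0) (x : Fin v → ZMod 2) :
    x ᵥ* Avf v f = x ↔ ∀ j : Fin v, (j : ℕ) < v - f → x j = 0 := by
  constructor
  · intro hx
    have hx' : ∀ j : Fin v, (x ᵥ* Avf v f) j = x j := fun j => congrFun hx j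
    have heven : ∀ j : Fin v, (j : ℕ) < v - f → (j : ℕ) % 2 = 0 → x j = 0 := by
      intro j hj hj2
      have hb : ((j : ℕ) + 1) < v := by have := j.isLt; omega
      set a : Fin v := ⟨(j : ℕ) + 1, hb⟩ with ha
      have hav : (a : ℕ) = (j : ℕ) + 1 := rfl
      have hxa := hx' a
      rw [vecMul_Avf hvf, dif_pos (by omega : (a : ℕ) < v - f),
        dif_neg (by omega : ¬ ((a : ℕ) % 2 = 0))] at hxa
      try simp only [show (a : ℕ) - 1 = (j : ℕ) from by omega, Fin.eta] at hxa
      -- hxa : x j + x a = x a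
      exact add_right_cancel (hxa.trans (zero_add (x a)).symm)
    intro j hj
    by_cases hj2 : (j : ℕ) % 2 = 0
    · exact heven j hj hj2
    · have hb : ((j : ℕ) - 1) < v := by have := j.isLt; omega
      set a : Fin v := ⟨(j : ℕ) - 1, hb⟩ with ha
      have hav : (a : ℕ) = (j : ℕ) - 1 := rfl
      have h1 := hx' a
      rw [vecMul_Avf hvf, dif_pos (by omega : (a : ℕ) < v - f),
        dif_pos (by omega : (a : ℕ) % 2 = 0)] at h1
      try simp only [show (a : ℕ) + 1 = (j : ℕ) from by omega, Fin.eta] at h1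
      -- h1 : x j = x a
      rw [h1]
      exact heven a (by omega) (by omega)
  · intro hx
    funext j
    rw [vecMul_Avf hvf]
    by_cases h : (j : ℕ) < v - f
    · by_cases h2 : (j : ℕ) % 2 = 0
      · rw [dif_pos h, dif_pos h2, hx _ (show ((j : ℕ) + 1 : ℕ) < v - f by omega), hx j h]
      · rw [dif_pos h, dif_neg h2, hx _ (show ((j : ℕ) - 1 : ℕ) < v - f by omega), hx j h,
          zero_add]
    · rw [dif_neg h]

/-- The submodule of vectors vanishing on the first `v - f` coordinates. -/
def fixSub (v f : ℕ) : Submodule (ZMod 2) (Fin v → ZMod 2) where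
  carrier := {x | ∀ j : Fin v, (j : ℕ) < v - f → x j = 0}
  add_mem' := by intro a b ha hb j hj; simp [ha j hj, hb j hj]
  zero_mem' := by intro j hj; rfl
  smul_mem' := by intro c x hx j hj; simp [hx j hj]

lemma card_fixSub (hfv : f ≤ v) : Nat.card (fixSub v f) = 2 ^ f := by
  classical
  have e2 : fixSub v f ≃ ({j : Fin v // v - f ≤ (j : ℕ)} → ZMod 2) := by
    refine
      { toFun := fun x j => x.1 j.1
        invFun := fun y => ⟨fun j => if h : v - f ≤ (j : ℕ) then y ⟨j, h⟩ else 0, ?_⟩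
        left_inv := ?_
        right_inv := ?_ }
    · intro j hj; exact dif_neg (by omega)
    · intro x
      apply Subtype.ext
      funext j
      show (if h : v - f ≤ (j : ℕ) then x.1 j else 0) = x.1 j
      by_cases h : v - f ≤ (j : ℕ)
      · rw [dif_pos h]
      · rw [dif_neg h]
        exact (x.2 j (by omega)).symm
    · intro y
      funext j
      show (if h : v - f ≤ ((j.1 : Fin v) : ℕ) then y ⟨j.1, h⟩ else 0) = y j
      rw [dif_pos j.2]
  have e3 : {j : Fin v // v - f ≤ (j : ℕ)} ≃ Fin f := by
    refine
      { toFun := fun j => ⟨(j : Fin v) - (v - f), ?_⟩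
        invFun := fun k => ⟨⟨(k : ℕ) + (v - f), by omega⟩, by simp⟩
        left_inv := ?_
        right_inv := ?_ }
    · have := j.2; have := (j.1).isLt; omega
    · intro j
      apply Subtype.ext; apply Fin.ext
      have := j.2; simp; omega
    · intro k
      apply Fin.ext; have := k.isLt; simp
  rw [Nat.card_congr e2, Nat.card_fun, Nat.card_congr e3]
  simp [Nat.card_eq_fintype_card]

open scoped Classical in
/-- Pairs of distinct nonzero vectors of a submodule, as a finset. -/
noncomputable def pairsOf {v : ℕ} (W : Submodule (ZMod 2) (Fin v → ZMod 2)) :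
    Finset ((Fin v → ZMod 2) × (Fin v → ZMod 2)) :=
  ((Finset.univ.filter (· ∈ W)).erase 0).offDiag

lemma mem_pairsOf {W : Submodule (ZMod 2) (Fin v → ZMod 2)}
    {p : (Fin v → ZMod 2) × (Fin v → ZMod 2)} :
    p ∈ pairsOf W ↔ p.1 ∈ W ∧ p.2 ∈ W ∧ p.1 ≠ 0 ∧ p.2 ≠ 0 ∧ p.1 ≠ p.2 := by
  classical
  simp only [pairsOf, Finset.mem_offDiag, Finset.mem_erase, Finset.mem_filter,
    Finset.mem_univ, true_and]
  tauto

lemma card_submodule (W : Submodule (ZMod 2) (Fin v → ZMod 2)) :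
    Nat.card W = 2 ^ Module.finrank (ZMod 2) W := by
  classical
  letI : Fintype W := Fintype.ofFinite W
  rw [Nat.card_eq_fintype_card, Module.card_eq_pow_finrank (K := ZMod 2) (V := W), ZMod.card]

lemma card_pairsOf (W : Submodule (ZMod 2) (Fin v → ZMod 2)) :
    (pairsOf W).card = (Nat.card W - 1) * (Nat.card W - 2) := by
  classical
  have hW : (Finset.univ.filter (· ∈ W)).card = Nat.card W := by
    rw [Nat.card_eq_fintype_card]
    exact (Fintype.card_subtype _).symm
  have h0 : (0 : Fin v → ZMod 2) ∈ Finset.univ.filter (· ∈ W) := by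
    simp [W.zero_mem]
  have hcard : ((Finset.univ.filter (· ∈ W)).erase 0).card = Nat.card W - 1 := by
    rw [Finset.card_erase_of_mem h0, hW]
  have hkey : ∀ m : ℕ, m * m - m = m * (m - 1) := by
    intro m
    cases m with
    | zero => simp
    | succ k =>
      rw [Nat.succ_sub_one, show (k + 1) * (k + 1) = (k + 1) * k + (k + 1) from by ring,
        Nat.add_sub_cancel]
  show ((Finset.univ.filter (· ∈ W)).erase 0).offDiag.card = _
  rw [Finset.offDiag_card, hcard, hkey, show Nat.card W - 1 - 1 = Nat.card W - 2 from by omega]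

lemma two_pow_mod_seven (k : ℕ) : 2 ^ (3 * k + 2) % 7 = 4 := by
  induction k with
  | zero => norm_num
  | succ k ih =>
    rw [show 3 * (k + 1) + 2 = (3 * k + 2) + 3 from by ring, pow_add, Nat.mul_mod, ih]
    norm_num

end Aux

/-- An `STS_2(v)` has no automorphism of order 3 of type `A_{v,f}` with
`f ≡ 2 (mod 3)`: if an `STS_2(v)` is invariant under a matrix conjugate in
`GL(v,2)` to `A_{v,f}`, then `f ≢ 2 (mod 3)`. -/
theorem stmt10 (v f : ℕ) (hf : f ≤ v - 1) (hvf : Even (v - f))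
    (D : Set (Submodule (ZMod 2) (Fin v → ZMod 2))) (hD : IsSTS v D)
    (M : Matrix (Fin v) (Fin v) (ZMod 2))
    (hM : ∃ C : GL (Fin v) (ZMod 2),
      (C : Matrix (Fin v) (Fin v) (ZMod 2)) * Avf v f * ((C⁻¹ : GL (Fin v) (ZMod 2)) : Matrix (Fin v) (Fin v) (ZMod 2)) = M)
    (hinv : (mapMat M) '' D = D) :
    f % 3 ≠ 2 := by
  classical
  intro hf2
  obtain ⟨C, hC⟩ := hM
  have hvf2 : (v - f) % 2 = 0 := Nat.even_iff.mp hvf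
  have hfge : 2 ≤ f := by omega
  have hfv : f ≤ v := by omega
  set A := Avf v f with hA
  have hCC : ((C⁻¹ : GL (Fin v) (ZMod 2)) : Matrix (Fin v) (Fin v) (ZMod 2)) *
      (C : Matrix (Fin v) (Fin v) (ZMod 2)) = 1 := Units.inv_mul C
  have hCC' : (C : Matrix (Fin v) (Fin v) (ZMod 2)) *
      ((C⁻¹ : GL (Fin v) (ZMod 2)) : Matrix (Fin v) (Fin v) (ZMod 2)) = 1 := Units.mul_inv C
  set F : Submodule (ZMod 2) (Fin v → ZMod 2) :=
    LinearMap.eqLocus M.vecMulLinear LinearMap.id with hFdef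
  have hFmem : ∀ x : Fin v → ZMod 2, x ∈ F ↔ x ᵥ* M = x := by
    intro x
    rw [hFdef, LinearMap.mem_eqLocus]
    simp
  have hMC : ∀ x : Fin v → ZMod 2, x ᵥ* M =
      ((x ᵥ* (C : Matrix (Fin v) (Fin v) (ZMod 2))) ᵥ* A) ᵥ*
        ((C⁻¹ : GL (Fin v) (ZMod 2)) : Matrix (Fin v) (Fin v) (ZMod 2)) := by
    intro x
    rw [Matrix.vecMul_vecMul, Matrix.vecMul_vecMul, ← mul_assoc, hC]
  have hInvC : ∀ y : Fin v → ZMod 2,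
      (y ᵥ* ((C⁻¹ : GL (Fin v) (ZMod 2)) : Matrix (Fin v) (Fin v) (ZMod 2))) ᵥ*
        (C : Matrix (Fin v) (Fin v) (ZMod 2)) = y := by
    intro y; rw [Matrix.vecMul_vecMul, hCC, Matrix.vecMul_one]
  have hCInv : ∀ y : Fin v → ZMod 2,
      (y ᵥ* (C : Matrix (Fin v) (Fin v) (ZMod 2))) ᵥ*
        ((C⁻¹ : GL (Fin v) (ZMod 2)) : Matrix (Fin v) (Fin v) (ZMod 2)) = y := by
    intro y; rw [Matrix.vecMul_vecMul, hCC', Matrix.vecMul_one]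
  have hM3 : ∀ x : Fin v → ZMod 2, ((x ᵥ* M) ᵥ* M) ᵥ* M = x := by
    intro x
    rw [hMC x, hMC _, hMC _, hInvC, hInvC, vecMul_Avf_cube hvf2, hCInv]
  have cardF : Nat.card F = 2 ^ f := by
    have e1 : F ≃ fixSub v f := by
      refine
        { toFun := fun x => ⟨x.1 ᵥ* (C : Matrix (Fin v) (Fin v) (ZMod 2)), ?_⟩
          invFun := fun y =>
            ⟨y.1 ᵥ* ((C⁻¹ : GL (Fin v) (ZMod 2)) : Matrix (Fin v) (Fin v) (ZMod 2)), ?_⟩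
          left_inv := ?_
          right_inv := ?_ }
      · rcases x with ⟨x, hx⟩
        rw [hFmem] at hx
        have hfix : (x ᵥ* (C : Matrix (Fin v) (Fin v) (ZMod 2))) ᵥ* A =
            x ᵥ* (C : Matrix (Fin v) (Fin v) (ZMod 2)) := by
          conv_rhs => rw [← hx, hMC]
          rw [hInvC]
        exact (fixA_iff hvf2 _).mp hfix
      · rcases y with ⟨y, hy⟩
        have hyA : y ᵥ* A = y := (fixA_iff hvf2 _).mpr hy
        rw [hFmem, hMC, hInvC, hyA]
      · intro x; apply Subtype.ext; exact hCInv _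
      · intro y; apply Subtype.ext; exact hInvC _
    rw [Nat.card_congr e1, card_fixSub hfv]
  have hinv' : ∀ B ∈ D, mapMat M B ∈ D := by
    intro B hB
    rw [← hinv]
    exact ⟨B, hB, rfl⟩
  have hfix_map : ∀ L : Submodule (ZMod 2) (Fin v → ZMod 2), L ≤ F → mapMat M L = L := by
    intro L hLF
    apply le_antisymm
    · intro y hy
      obtain ⟨x, hx, rfl⟩ := hy
      have hfx : x ᵥ* M = x := (hFmem x).mp (hLF hx)
      simpa [mapMat, Matrix.vecMulLinear_apply, hfx] using hx
    · intro x hx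
      have hfx : x ᵥ* M = x := (hFmem x).mp (hLF hx)
      exact ⟨x, hx, by simp [Matrix.vecMulLinear_apply, hfx]⟩
  have key : ∀ B ∈ D, ∀ L : Submodule (ZMod 2) (Fin v → ZMod 2),
      L ≤ B → L ≤ F → Module.finrank (ZMod 2) L = 2 → B ≤ F := by
    intro B hB L hLB hLF hL2
    have hB3 := hD.1 B hB
    obtain ⟨B', ⟨hB'D, hB'L⟩, hB'u⟩ := hD.2 L hL2
    have hBB' : B = B' := hB'u B ⟨hB, hLB⟩
    have hMB : mapMat M B = B := by
      have h1 : mapMat M B ∈ D := hinv' B hB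
      have h2 : L ≤ mapMat M B := by
        rw [← hfix_map L hLF]
        exact Submodule.map_mono hLB
      rw [hB'u (mapMat M B) ⟨h1, h2⟩, ← hBB']
    by_contra hnot
    obtain ⟨y, hyB, hyF⟩ := SetLike.not_le_iff_exists.mp hnot
    set FB := F ⊓ B with hFB
    have hLFB : L ≤ FB := le_inf hLF hLB
    have h2r : 2 ≤ Module.finrank (ZMod 2) FB := by
      have hm := Submodule.finrank_mono (R := ZMod 2) hLFB
      omega
    have hyFB : y ∉ FB := fun hc => hyF (hc.1)
    have hlt : FB < FB ⊔ Submodule.span (ZMod 2) {y} :=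
      SetLike.lt_iff_le_and_exists.mpr
        ⟨le_sup_left, y, Submodule.mem_sup_right (Submodule.mem_span_singleton_self y), hyFB⟩
    have h3r : 3 ≤ Module.finrank (ZMod 2) ↥(FB ⊔ Submodule.span (ZMod 2) {y}) := by
      have hm : Module.finrank (ZMod 2) ↥FB <
          Module.finrank (ZMod 2) ↥(FB ⊔ Submodule.span (ZMod 2) {y}) :=
        Submodule.finrank_lt_finrank_of_lt hlt
      omega
    have hsup_le : FB ⊔ Submodule.span (ZMod 2) {y} ≤ B :=
      sup_le inf_le_right ((Submodule.span_singleton_le_iff_mem y B).mpr hyB)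
    have hEq : FB ⊔ Submodule.span (ZMod 2) {y} = B :=
      Submodule.eq_of_le_of_finrank_le hsup_le (by omega)
    have hTy : y ᵥ* M ∈ B := by
      have hmem : y ᵥ* M ∈ mapMat M B :=
        ⟨y, hyB, by simp [Matrix.vecMulLinear_apply]⟩
      rwa [hMB] at hmem
    rw [← hEq] at hTy
    obtain ⟨z, hz, w, hw, hzw⟩ := Submodule.mem_sup.mp hTy
    obtain ⟨c, rfl⟩ := Submodule.mem_span_singleton.mp hw
    have hzF : z ᵥ* M = z := (hFmem z).mp hz.1
    have hall01 : ∀ c : ZMod 2, c = 0 ∨ c = 1 := by decide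
    have hc01 : c = 0 ∨ c = 1 := hall01 c
    have hadd_self : ∀ u : Fin v → ZMod 2, u + u = 0 := by
      intro u; funext i
      have h22 : ∀ a : ZMod 2, a + a = 0 := by decide
      exact h22 (u i)
    rcases hc01 with rfl | rfl
    · rw [zero_smul, add_zero] at hzw
      have hy3 := hM3 y
      rw [← hzw, hzF, hzF] at hy3
      exact hyF (hy3 ▸ hz.1)
    · rw [one_smul] at hzw
      have h1 : y ᵥ* M = z + y := hzw.symm
      have h2 : (y ᵥ* M) ᵥ* M = y := by
        rw [h1, Matrix.add_vecMul, hzF, h1, ← add_assoc, hadd_self z, zero_add]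
      have h3 := hM3 y
      rw [h2, h1] at h3
      have hz0 : z = 0 := by
        calc z = z + (y + y) := by rw [hadd_self y, add_zero]
          _ = (z + y) + y := by rw [add_assoc]
          _ = y + y := by rw [h3]
          _ = 0 := hadd_self y
      rw [hz0, zero_add] at h1
      exact hyF ((hFmem y).mpr h1)
  have hspan2 : ∀ x y : Fin v → ZMod 2, x ≠ 0 → y ≠ 0 → x ≠ y →
      Module.finrank (ZMod 2) (Submodule.span (ZMod 2) {x, y}) = 2 := by
    intro x y hx hy hxy
    have hli : LinearIndependent (ZMod 2) ![x, y] := by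
      rw [LinearIndependent.pair_iff]
      intro a b hab
      have hall01 : ∀ c : ZMod 2, c = 0 ∨ c = 1 := by decide
      rcases hall01 a with rfl | rfl <;> rcases hall01 b with rfl | rfl
      · exact ⟨rfl, rfl⟩
      · exact absurd (by simpa using hab) hy
      · exact absurd (by simpa using hab) hx
      · exfalso
        apply hxy
        have hab' : x + y = 0 := by simpa using hab
        funext i
        have hi := congrFun hab' i
        have h22 : ∀ a b : ZMod 2, a + b = 0 → a = b := by decide
        exact h22 _ _ hi
    have hfr := finrank_span_eq_card hli
    rw [show Set.range ![x, y] = {x, y} by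
      ext u; simp [Matrix.range_cons, Matrix.range_empty, or_comm]] at hfr
    simpa using hfr
  have finSub : Finite (Submodule (ZMod 2) (Fin v → ZMod 2)) :=
    Finite.of_injective _ SetLike.coe_injective
  letI : Fintype (Submodule (ZMod 2) (Fin v → ZMod 2)) := Fintype.ofFinite _
  set DF : Finset (Submodule (ZMod 2) (Fin v → ZMod 2)) :=
    Finset.univ.filter (fun B => B ∈ D ∧ B ≤ F) with hDF
  set blk : ((Fin v → ZMod 2) × (Fin v → ZMod 2)) → Submodule (ZMod 2) (Fin v → ZMod 2) :=
    fun p =>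
      if h : Module.finrank (ZMod 2) (Submodule.span (ZMod 2) {p.1, p.2}) = 2 then
        (hD.2 _ h).choose
      else ⊥ with hblk
  have hblk_mem : ∀ p, ∀ h : Module.finrank (ZMod 2) (Submodule.span (ZMod 2) {p.1, p.2}) = 2,
      (blk p ∈ D ∧ Submodule.span (ZMod 2) {p.1, p.2} ≤ blk p) ∧
        ∀ B', B' ∈ D ∧ Submodule.span (ZMod 2) {p.1, p.2} ≤ B' → B' = blk p := by
    intro p h
    rw [hblk]
    simp only [dif_pos h]
    exact (hD.2 _ h).choose_spec
  have hU1 : ∀ p ∈ pairsOf F, blk p ∈ DF := by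
    intro p hp
    rw [mem_pairsOf] at hp
    obtain ⟨hp1, hp2, hn1, hn2, hne⟩ := hp
    have hdim := hspan2 p.1 p.2 hn1 hn2 hne
    obtain ⟨⟨hbD, hbL⟩, _⟩ := hblk_mem p hdim
    have hLF : Submodule.span (ZMod 2) {p.1, p.2} ≤ F := by
      rw [Submodule.span_le]
      intro u hu
      rcases hu with rfl | hu
      · exact hp1
      · rcases hu with rfl; exact hp2
    have hBF : blk p ≤ F := key (blk p) hbD _ hbL hLF hdim
    rw [hDF, Finset.mem_filter]
    exact ⟨Finset.mem_univ _, hbD, hBF⟩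
  have hU2 : ∀ B ∈ DF, (pairsOf F).filter (fun p => blk p = B) = pairsOf B := by
    intro B hB
    rw [hDF, Finset.mem_filter] at hB
    obtain ⟨-, hBD, hBF⟩ := hB
    ext p
    rw [Finset.mem_filter, mem_pairsOf, mem_pairsOf]
    constructor
    · rintro ⟨⟨hp1, hp2, hn1, hn2, hne⟩, hbp⟩
      have hdim := hspan2 p.1 p.2 hn1 hn2 hne
      obtain ⟨⟨hbD, hbL⟩, -⟩ := hblk_mem p hdim
      rw [hbp] at hbL
      exact ⟨hbL (Submodule.subset_span (by simp)),
        hbL (Submodule.subset_span (by simp)), hn1, hn2, hne⟩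
    · rintro ⟨hp1, hp2, hn1, hn2, hne⟩
      have hdim := hspan2 p.1 p.2 hn1 hn2 hne
      obtain ⟨⟨hbD, hbL⟩, hu⟩ := hblk_mem p hdim
      have hspanB : Submodule.span (ZMod 2) {p.1, p.2} ≤ B := by
        rw [Submodule.span_le]
        intro u hu'
        rcases hu' with rfl | hu'
        · exact hp1
        · rcases hu' with rfl; exact hp2
      refine ⟨⟨hBF hp1, hBF hp2, hn1, hn2, hne⟩, (hu B ⟨hBD, hspanB⟩).symm⟩
  have hcount : (pairsOf F).card = ∑ B ∈ DF, (pairsOf B).card := by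
    rw [Finset.card_eq_sum_card_fiberwise hU1]
    exact Finset.sum_congr rfl fun B hB => by rw [hU2 B hB]
  have hblock42 : ∀ B ∈ DF, (pairsOf B).card = 42 := by
    intro B hB
    rw [hDF, Finset.mem_filter] at hB
    have hB3 := hD.1 B hB.2.1
    rw [card_pairsOf, card_submodule, hB3]
    norm_num
  have hsum : (pairsOf F).card = 42 * DF.card := by
    rw [hcount, Finset.sum_congr rfl hblock42, Finset.sum_const, smul_eq_mul, mul_comm]
  have hcardU : (pairsOf F).card = (2 ^ f - 1) * (2 ^ f - 2) := by
    rw [card_pairsOf, cardF]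
  obtain ⟨k, hk⟩ : ∃ k, f = 3 * k + 2 := ⟨f / 3, by omega⟩
  have h7 : 2 ^ f % 7 = 4 := by rw [hk]; exact two_pow_mod_seven k
  have hge4 : 4 ≤ 2 ^ f := by
    calc (4 : ℕ) = 2 ^ 2 := rfl
    _ ≤ 2 ^ f := Nat.pow_le_pow_right (by norm_num) hfge
  have hmod : ((2 ^ f - 1) * (2 ^ f - 2)) % 7 = 6 := by
    rw [Nat.mul_mod]
    have h1 : (2 ^ f - 1) % 7 = 3 := by omega
    have h2 : (2 ^ f - 2) % 7 = 2 := by omega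
    rw [h1, h2]
  have hmod0 : ((2 ^ f - 1) * (2 ^ f - 2)) % 7 = 0 := by
    rw [← hcardU, hsum]
    omega
  omega
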